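/- Let X, Y be discrete random variables with all conditional distributions defined, and let x_1, x_2 be two points of the support of X. Let T merge exactly x_1 and x_2 (T(x) = x for x ∉ {x_1,x_2}, T(x_1) = T(x_2)). Then I(X,Y) − I(T(X),Y) = P(x_1) KL(P_{Y|x_1} ‖ M) + P(x_2) KL(P_{Y|x_2} ‖ M) ≥ [P(x_1)P(x_2)/(2(P(x_1)+P(x_2)))] · D_1(P_{Y|x_1}, P_{Y|x_2})², where M = (P(x_1)P_{Y|x_1} + P(x_2)P_{Y|x_2})/(P(x_1)+P(x_2)). -/

import Mathlib

/-!
Since `MI P = ∑ₓ P(x) KL(P_{Y|x} ‖ P_Y)`, merging `x₁` and `x₂` only replaces the two summands of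
`x₁, x₂` by `(P(x₁) + P(x₂)) KL(M ‖ P_Y)`, and the compensation identity for KL turns the difference
into `P(x₁) KL(P_{Y|x₁} ‖ M) + P(x₂) KL(P_{Y|x₂} ‖ M)`. For the lower bound, apply Pinsker's
inequality to both terms: `‖P_{Y|x₁} - M‖₁` and `‖P_{Y|x₂} - M‖₁` are the fractions
`P(x₂)/(P(x₁)+P(x₂))` and `P(x₁)/(P(x₁)+P(x₂))` of `‖P_{Y|x₁} - P_{Y|x₂}‖₁`.
-/

open Finset

noncomputable section

/-- Marginal of X under joint P. -/
def margX {α β : Type*} [Fintype β] (P : α → β → ℝ) (x : α) : ℝ := ∑ y, P x y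

/-- Marginal of Y under joint P. -/
def margY {α β : Type*} [Fintype α] (P : α → β → ℝ) (y : β) : ℝ := ∑ x, P x y

/-- Conditional probability P(y|x). -/
def condYX {α β : Type*} [Fintype β] (P : α → β → ℝ) (y : β) (x : α) : ℝ := P x y / margX P x

/-- Conditional probability P(x|y). -/
def condXY {α β : Type*} [Fintype α] (P : α → β → ℝ) (x : α) (y : β) : ℝ := P x y / margY P y

/-- Mutual information of a discrete joint distribution (natural log). -/
def MI {α β : Type*} [Fintype α] [Fintype β] (P : α → β → ℝ) : ℝ :=
  ∑ x, ∑ y, P x y * Real.log (P x y / (margX P x * margY P y))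

/-- Joint distribution of (T(X), Y). -/
def jointT {α β τ : Type*} [Fintype α] [DecidableEq τ] (P : α → β → ℝ) (T : α → τ)
    (t : τ) (y : β) : ℝ :=
  ∑ x ∈ Finset.univ.filter (fun x => T x = t), P x y

/-- Conditional distribution of Y given the cluster T(X) = t. -/
def condYT {α β τ : Type*} [Fintype α] [Fintype β] [DecidableEq τ] (P : α → β → ℝ)
    (T : α → τ) (t : τ) (y : β) : ℝ :=
  jointT P T t y / (∑ x ∈ Finset.univ.filter (fun x => T x = t), margX P x)

/-- Kullback–Leibler divergence (natural log). -/
def KL {β : Type*} [Fintype β] (p q : β → ℝ) : ℝ := ∑ y, p y * Real.log (p y / q y)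

/-- L1 distance between distributions. -/
def D1 {β : Type*} [Fintype β] (p q : β → ℝ) : ℝ := ∑ y, |p y - q y|

open Real

lemma monotoneOn_mul_log_sub :
    MonotoneOn (fun t : ℝ => (t + 1) * log t - 2 * (t - 1)) (Set.Ioi 0) := by
  have hderiv : ∀ x ∈ Set.Ioi (0 : ℝ),
      HasDerivAt (fun t : ℝ => (t + 1) * log t - 2 * (t - 1)) (log x - (1 - x⁻¹)) x := by
    intro x hx
    have h := (((hasDerivAt_id' x).add_const 1).fun_mul (hasDerivAt_log (ne_of_gt hx))).fun_sub
      (((hasDerivAt_id' x).sub_const 1).const_mul 2)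
    refine h.congr_deriv ?_
    field_simp [(Set.mem_Ioi.mp hx).ne']
    ring
  refine monotoneOn_of_hasDerivWithinAt_nonneg (convex_Ioi 0)
    (fun x hx => (hderiv x hx).continuousAt.continuousWithinAt)
    (fun x hx => (hderiv x (interior_subset hx)).hasDerivWithinAt) (fun x hx => ?_)
  rw [interior_Ioi] at hx
  exact sub_nonneg.mpr (one_sub_inv_le_log_of_pos hx)

lemma apply_le_apply_of_sign_deriv {f f' : ℝ → ℝ} {a t : ℝ} (ha : 0 < a) (ht : 0 < t)
    (hf : ∀ x, 0 < x → HasDerivAt f (f' x) x) (hf' : ∀ x, 0 < x → 0 ≤ (x - a) * f' x) :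
    f a ≤ f t := by
  have hcont : ∀ s u, 0 < s → ContinuousOn f (Set.Icc s u) := fun s u hs x hx =>
    (hf x (hs.trans_le hx.1)).continuousAt.continuousWithinAt
  have hderiv : ∀ s u, 0 < s → ∀ x ∈ interior (Set.Icc s u),
      HasDerivWithinAt f (f' x) (interior (Set.Icc s u)) x := fun s u hs x hx =>
    (hf x (hs.trans (by simpa using hx : x ∈ Set.Ioo s u).1)).hasDerivWithinAt
  rcases le_total a t with hat | hta
  · refine monotoneOn_of_hasDerivWithinAt_nonneg (convex_Icc a t) (hcont a t ha) (hderiv a t ha)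
      (fun x hx => ?_) ⟨le_rfl, hat⟩ ⟨hat, le_rfl⟩ hat
    rw [interior_Icc] at hx
    exact nonneg_of_mul_nonneg_right (hf' x (ha.trans hx.1)) (sub_pos.mpr hx.1)
  · refine antitoneOn_of_hasDerivWithinAt_nonpos (convex_Icc t a) (hcont t a ht) (hderiv t a ht)
      (fun x hx => ?_) ⟨le_rfl, hta⟩ ⟨hta, le_rfl⟩ hta
    rw [interior_Icc] at hx
    exact nonpos_of_mul_nonneg_right (hf' x (ht.trans hx.1)) (sub_neg.mpr hx.2)

lemma sq_sub_one_le_mul_mul_log_sub (t : ℝ) (ht : 0 < t) :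
    3 * (t - 1) ^ 2 ≤ (2 * t + 4) * (t * log t - t + 1) := by
  have hderiv : ∀ x, 0 < x →
      HasDerivAt (fun t : ℝ => (2 * t + 4) * (t * log t - t + 1) - 3 * (t - 1) ^ 2)
        (4 * ((x + 1) * log x - 2 * (x - 1))) x := by
    intro x hx
    have h := ((((hasDerivAt_id' x).const_mul 2).add_const 4).fun_mul
      (((hasDerivAt_mul_log (ne_of_gt hx)).fun_sub (hasDerivAt_id' x)).add_const 1)).fun_sub
      ((((hasDerivAt_id' x).sub_const 1).fun_pow 2).const_mul 3)
    refine h.congr_deriv ?_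
    simp only [Nat.cast_ofNat]
    ring
  have hsign : ∀ x, 0 < x → 0 ≤ (x - 1) * (4 * ((x + 1) * log x - 2 * (x - 1))) := by
    intro x hx
    rcases le_total 1 x with h | h
    · have := monotoneOn_mul_log_sub (Set.mem_Ioi.mpr one_pos) (Set.mem_Ioi.mpr hx) h
      norm_num at this
      nlinarith
    · have := monotoneOn_mul_log_sub (Set.mem_Ioi.mpr hx) (Set.mem_Ioi.mpr one_pos) h
      norm_num at this
      nlinarith
  have := apply_le_apply_of_sign_deriv one_pos ht hderiv hsign
  simp only [log_one] at this
  linarith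

lemma sq_sub_le_mul_mul_log_sub (a b : ℝ) (ha : 0 < a) (hb : 0 < b) :
    3 * (a - b) ^ 2 ≤ (2 * a + 4 * b) * (a * log (a / b) - a + b) := by
  have hb' := hb.ne'
  set L := log (a / b)
  calc 3 * (a - b) ^ 2 = b ^ 2 * (3 * (a / b - 1) ^ 2) := by field_simp
    _ ≤ b ^ 2 * ((2 * (a / b) + 4) * (a / b * L - a / b + 1)) :=
        mul_le_mul_of_nonneg_left (sq_sub_one_le_mul_mul_log_sub _ (div_pos ha hb)) (sq_nonneg b)
    _ = (2 * a + 4 * b) * (a * L - a + b) := by field_simp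

section Divergence

variable {β : Type*}

/-- Pinsker's inequality: Cauchy–Schwarz against the weights `(2p + 4q)/3` reduces it to the
pointwise bound `sq_sub_le_mul_mul_log_sub`. -/
theorem D1_sq_le_two_mul_KL [Fintype β] (p q : β → ℝ) (hp : ∀ y, 0 < p y) (hq : ∀ y, 0 < q y)
    (hp1 : ∑ y, p y = 1) (hq1 : ∑ y, q y = 1) :
    D1 p q ^ 2 ≤ 2 * KL p q := by
  set w : β → ℝ := fun y => (2 * p y + 4 * q y) / 3
  have hw : ∀ y, 0 < w y := fun y => by have := hp y; have := hq y; positivity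
  have hw_sum : ∑ y, w y = 2 := by
    simp only [w, ← sum_div, sum_add_distrib, ← mul_sum, hp1, hq1]
    norm_num
  have hterm : ∀ y, |p y - q y| ^ 2 / w y ≤ p y * log (p y / q y) - p y + q y := fun y => by
    rw [div_le_iff₀ (hw y), sq_abs]
    simp only [w]
    linarith [sq_sub_le_mul_mul_log_sub (p y) (q y) (hp y) (hq y)]
  calc D1 p q ^ 2 = 2 * ((∑ y, |p y - q y|) ^ 2 / ∑ y, w y) := by
        rw [hw_sum, D1]; ring
    _ ≤ 2 * ∑ y, |p y - q y| ^ 2 / w y := by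
        gcongr; exact sq_sum_div_le_sum_sq_div _ _ fun y _ => hw y
    _ ≤ 2 * ∑ y, (p y * log (p y / q y) - p y + q y) := by
        gcongr with y; exact hterm y
    _ = 2 * KL p q := by
        rw [sum_add_distrib, sum_sub_distrib, hp1, hq1, KL]; ring

/-- The distribution `M` of the merged cluster. -/
def mixture (w₁ w₂ : ℝ) (p₁ p₂ : β → ℝ) (y : β) : ℝ := (w₁ * p₁ y + w₂ * p₂ y) / (w₁ + w₂)

variable {w₁ w₂ : ℝ} {p₁ p₂ : β → ℝ}

lemma mixture_pos (hw₁ : 0 < w₁) (hw₂ : 0 < w₂) (hp₁ : ∀ y, 0 < p₁ y) (hp₂ : ∀ y, 0 < p₂ y)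
    (y : β) : 0 < mixture w₁ w₂ p₁ p₂ y := by
  have := hp₁ y; have := hp₂ y; unfold mixture; positivity

variable [Fintype β]

lemma sum_mixture (hw : w₁ + w₂ ≠ 0) (hp₁ : ∑ y, p₁ y = 1) (hp₂ : ∑ y, p₂ y = 1) :
    ∑ y, mixture w₁ w₂ p₁ p₂ y = 1 := by
  simp only [mixture, ← sum_div, sum_add_distrib, ← mul_sum, hp₁, hp₂, mul_one, div_self hw]

lemma D1_mixture_left (hw₂ : 0 ≤ w₂) (hw : 0 < w₁ + w₂) :
    D1 p₁ (mixture w₁ w₂ p₁ p₂) = w₂ / (w₁ + w₂) * D1 p₁ p₂ := by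
  rw [D1, D1, mul_sum]
  refine sum_congr rfl fun y _ => ?_
  rw [← abs_of_nonneg (div_nonneg hw₂ hw.le), ← abs_mul, mixture]
  congr 1
  field_simp
  ring

lemma D1_mixture_right (hw₁ : 0 ≤ w₁) (hw : 0 < w₁ + w₂) :
    D1 p₂ (mixture w₁ w₂ p₁ p₂) = w₁ / (w₁ + w₂) * D1 p₁ p₂ := by
  rw [D1, D1, mul_sum]
  refine sum_congr rfl fun y _ => ?_
  rw [abs_sub_comm (p₁ y), ← abs_of_nonneg (div_nonneg hw₁ hw.le), ← abs_mul, mixture]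
  congr 1
  field_simp
  ring

lemma KL_compensation (q : β → ℝ) (hw₁ : 0 < w₁) (hw₂ : 0 < w₂) (hp₁ : ∀ y, 0 < p₁ y)
    (hp₂ : ∀ y, 0 < p₂ y) (hq : ∀ y, 0 < q y) :
    w₁ * KL p₁ q + w₂ * KL p₂ q
      = w₁ * KL p₁ (mixture w₁ w₂ p₁ p₂) + w₂ * KL p₂ (mixture w₁ w₂ p₁ p₂)
        + (w₁ + w₂) * KL (mixture w₁ w₂ p₁ p₂) q := by
  simp only [KL, mul_sum, ← sum_add_distrib]
  refine sum_congr rfl fun y _ => ?_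
  have hM := mixture_pos hw₁ hw₂ hp₁ hp₂ y
  have hsum : (w₁ + w₂) * mixture w₁ w₂ p₁ p₂ y = w₁ * p₁ y + w₂ * p₂ y := by
    rw [mixture]; field_simp
  rw [log_div (hp₁ y).ne' (hq y).ne', log_div (hp₂ y).ne' (hq y).ne',
    log_div (hp₁ y).ne' hM.ne', log_div (hp₂ y).ne' hM.ne', log_div hM.ne' (hq y).ne']
  linear_combination (log (q y) - log (mixture w₁ w₂ p₁ p₂ y)) * hsum

lemma mul_D1_sq_le_KL_mixture (hw₁ : 0 < w₁) (hw₂ : 0 < w₂) (hp₁ : ∀ y, 0 < p₁ y)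
    (hp₂ : ∀ y, 0 < p₂ y) (hp₁1 : ∑ y, p₁ y = 1) (hp₂1 : ∑ y, p₂ y = 1) :
    w₁ * w₂ / (2 * (w₁ + w₂)) * D1 p₁ p₂ ^ 2
      ≤ w₁ * KL p₁ (mixture w₁ w₂ p₁ p₂) + w₂ * KL p₂ (mixture w₁ w₂ p₁ p₂) := by
  have hw : 0 < w₁ + w₂ := add_pos hw₁ hw₂
  have hM := sum_mixture hw.ne' hp₁1 hp₂1 (p₁ := p₁) (p₂ := p₂)
  have h₁ := D1_sq_le_two_mul_KL _ _ hp₁ (mixture_pos hw₁ hw₂ hp₁ hp₂) hp₁1 hM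
  have h₂ := D1_sq_le_two_mul_KL _ _ hp₂ (mixture_pos hw₁ hw₂ hp₁ hp₂) hp₂1 hM
  rw [D1_mixture_left hw₂.le hw] at h₁
  rw [D1_mixture_right hw₁.le hw] at h₂
  calc w₁ * w₂ / (2 * (w₁ + w₂)) * D1 p₁ p₂ ^ 2
      = w₁ / 2 * (w₂ / (w₁ + w₂) * D1 p₁ p₂) ^ 2
          + w₂ / 2 * (w₁ / (w₁ + w₂) * D1 p₁ p₂) ^ 2 := by
        field_simp; ring
    _ ≤ w₁ / 2 * (2 * KL p₁ (mixture w₁ w₂ p₁ p₂))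
          + w₂ / 2 * (2 * KL p₂ (mixture w₁ w₂ p₁ p₂)) := by
        gcongr
    _ = _ := by ring

end Divergence

section Information

variable {α β : Type*}

lemma MI_eq_sum_margX_mul_KL [Fintype α] [Fintype β] (P : α → β → ℝ) :
    MI P = ∑ x, margX P x * KL (fun y => condYX P y x) (margY P) := by
  refine sum_congr rfl fun x _ => ?_
  rw [KL, mul_sum]
  refine sum_congr rfl fun y _ => ?_
  rcases eq_or_ne (margX P x) 0 with h | h
  · simp [h]
  · rw [condYX, div_div, ← mul_assoc, mul_div_cancel₀ _ h]

lemma margY_jointT [Fintype α] {τ : Type*} [Fintype τ] [DecidableEq τ] (P : α → β → ℝ)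
    (T : α → τ) :
    margY (jointT P T) = margY P :=
  funext fun y => sum_fiberwise univ T fun x => P x y

variable {P : α → β → ℝ}

lemma margX_pos [Fintype β] [Nonempty β] (hP : ∀ x y, 0 < P x y) (x : α) : 0 < margX P x :=
  sum_pos (fun y _ => hP x y) univ_nonempty

lemma margY_pos [Fintype α] [Nonempty α] (hP : ∀ x y, 0 < P x y) (y : β) : 0 < margY P y :=
  sum_pos (fun x _ => hP x y) univ_nonempty

lemma condYX_pos [Fintype β] [Nonempty β] (hP : ∀ x y, 0 < P x y) (x : α) (y : β) :
    0 < condYX P y x :=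
  div_pos (hP x y) (margX_pos hP x)

lemma sum_condYX [Fintype β] {x : α} (h : margX P x ≠ 0) : ∑ y, condYX P y x = 1 := by
  rw [← div_self h, margX, sum_div]
  rfl

variable [Fintype α] [DecidableEq α] {x₁ x₂ : α}

lemma jointT_merge_left (hne : x₁ ≠ x₂) :
    jointT P (fun x => if x = x₂ then x₁ else x) x₁ = P x₁ + P x₂ := by
  ext y
  rw [jointT, sum_filter, Fintype.sum_eq_add x₁ x₂ hne]
  · simp [hne]
  · rintro x ⟨h₁, h₂⟩
    simp [h₁, h₂]

lemma jointT_merge_right (hne : x₁ ≠ x₂) :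
    jointT P (fun x => if x = x₂ then x₁ else x) x₂ = 0 := by
  ext y
  refine sum_eq_zero fun x hx => absurd (mem_filter.1 hx).2 ?_
  show ¬(if x = x₂ then x₁ else x) = x₂
  split_ifs with h
  exacts [hne, h]

lemma jointT_merge_of_ne {x : α} (h₁ : x ≠ x₁) (h₂ : x ≠ x₂) :
    jointT P (fun x => if x = x₂ then x₁ else x) x = P x := by
  ext y
  rw [jointT, sum_filter, Fintype.sum_eq_single x]
  · simp [h₂]
  · intro z hz
    split_ifs with h h' <;> simp_all

lemma margX_jointT_merge_left [Fintype β] (hne : x₁ ≠ x₂) :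
    margX (jointT P (fun x => if x = x₂ then x₁ else x)) x₁ = margX P x₁ + margX P x₂ := by
  simp only [margX, jointT_merge_left hne, Pi.add_apply, sum_add_distrib]

lemma margX_jointT_merge_right [Fintype β] (hne : x₁ ≠ x₂) :
    margX (jointT P (fun x => if x = x₂ then x₁ else x)) x₂ = 0 := by
  simp only [margX, jointT_merge_right hne, Pi.zero_apply, sum_const_zero]

lemma condYX_jointT_merge_left [Fintype β] (hne : x₁ ≠ x₂) (h₁ : margX P x₁ ≠ 0)
    (h₂ : margX P x₂ ≠ 0) :
    (fun y => condYX (jointT P (fun x => if x = x₂ then x₁ else x)) y x₁)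
      = mixture (margX P x₁) (margX P x₂) (fun y => condYX P y x₁) fun y => condYX P y x₂ := by
  ext y
  simp only [condYX, mixture]
  rw [margX_jointT_merge_left hne, jointT_merge_left hne, Pi.add_apply, mul_div_cancel₀ _ h₁,
    mul_div_cancel₀ _ h₂]

theorem MI_sub_MI_merge [Fintype β] [Nonempty β] (hP : ∀ x y, 0 < P x y) (hne : x₁ ≠ x₂) :
    MI P - MI (jointT P (fun x => if x = x₂ then x₁ else x))
      = margX P x₁ * KL (fun y => condYX P y x₁)
          (mixture (margX P x₁) (margX P x₂) (fun y => condYX P y x₁) fun y => condYX P y x₂)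
        + margX P x₂ * KL (fun y => condYX P y x₂)
          (mixture (margX P x₁) (margX P x₂) (fun y => condYX P y x₁) fun y => condYX P y x₂) := by
  have hm := margX_pos hP
  have : Nonempty α := ⟨x₁⟩
  rw [MI_eq_sum_margX_mul_KL, MI_eq_sum_margX_mul_KL, margY_jointT, ← sum_sub_distrib,
    Fintype.sum_eq_add x₁ x₂ hne]
  · rw [condYX_jointT_merge_left hne (hm x₁).ne' (hm x₂).ne', margX_jointT_merge_left hne,
      margX_jointT_merge_right hne]
    linarith [KL_compensation (margY P) (hm x₁) (hm x₂) (condYX_pos hP x₁) (condYX_pos hP x₂)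
      (margY_pos hP)]
  · rintro x ⟨h₁, h₂⟩
    simp only [margX, condYX, jointT_merge_of_ne h₁ h₂, sub_self]

end Information

theorem merge_two_info_loss_general {α β : Type*} [Fintype α] [Fintype β] [DecidableEq α]
    (P : α → β → ℝ) (hP : ∀ x y, 0 < P x y)
    (x₁ x₂ : α) (hne : x₁ ≠ x₂) :
    MI P - MI (jointT P (fun x => if x = x₂ then x₁ else x))
        = margX P x₁ * KL (fun y => condYX P y x₁)
            (fun y => (margX P x₁ * condYX P y x₁ + margX P x₂ * condYX P y x₂) /
              (margX P x₁ + margX P x₂))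
          + margX P x₂ * KL (fun y => condYX P y x₂)
            (fun y => (margX P x₁ * condYX P y x₁ + margX P x₂ * condYX P y x₂) /
              (margX P x₁ + margX P x₂)) ∧
    margX P x₁ * margX P x₂ / (2 * (margX P x₁ + margX P x₂)) *
        D1 (fun y => condYX P y x₁) (fun y => condYX P y x₂) ^ 2
      ≤ MI P - MI (jointT P (fun x => if x = x₂ then x₁ else x)) := by
  rcases isEmpty_or_nonempty β with _ | _
  · simp [MI, KL, D1]
  have hm := margX_pos hP
  refine ⟨MI_sub_MI_merge hP hne, ?_⟩
  rw [MI_sub_MI_merge hP hne]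
  exact mul_D1_sq_le_KL_mixture (hm x₁) (hm x₂) (condYX_pos hP x₁) (condYX_pos hP x₂)
    (sum_condYX (hm x₁).ne') (sum_condYX (hm x₂).ne')

/-- Merging exactly two points: exact information loss and its Pinsker
lower bound. -/
theorem merge_two_info_loss {α β : Type*} [Fintype α] [Fintype β] [DecidableEq α]
    (P : α → β → ℝ) (hP : ∀ x y, 0 < P x y) (hsum : ∑ x, ∑ y, P x y = 1)
    (x₁ x₂ : α) (hne : x₁ ≠ x₂) :
    MI P - MI (jointT P (fun x => if x = x₂ then x₁ else x))
        = margX P x₁ * KL (fun y => condYX P y x₁)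
            (fun y => (margX P x₁ * condYX P y x₁ + margX P x₂ * condYX P y x₂) /
              (margX P x₁ + margX P x₂))
          + margX P x₂ * KL (fun y => condYX P y x₂)
            (fun y => (margX P x₁ * condYX P y x₁ + margX P x₂ * condYX P y x₂) /
              (margX P x₁ + margX P x₂)) ∧
    margX P x₁ * margX P x₂ / (2 * (margX P x₁ + margX P x₂)) *
        D1 (fun y => condYX P y x₁) (fun y => condYX P y x₂) ^ 2
      ≤ MI P - MI (jointT P (fun x => if x = x₂ then x₁ else x)) :=
  merge_two_info_loss_general P hP x₁ x₂ hne
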